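/- arXiv:1807.05755 — 2 statements merged into one kernel-verified Lean document; each statement's English description precedes it below -/
import Mathlib

section
/- Let G = C_n(S) be a circulant graph whose independence complex Δ has dimension 2. Let 𝒯 be the set of triangles {0, a, b} ⊆ ℤ/nℤ with |a|_n, |b|_n, |b−a|_n ∈ S̄ which are not of the form where |a|_n = |b|_n = |b−a|_n. Then 3 divides |𝒯|. -/
/-- The "reduced absolute value" |x|_n = min(x mod n, n - x mod n). -/
def redAbs (n : ℕ) (x : ZMod n) : ℕ := min x.val (n - x.val)

/-- The circulant graph C_n(S). -/
def circulant (n : ℕ) (S : Finset ℕ) : SimpleGraph (ZMod n) :=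
  SimpleGraph.fromRel (fun i j => redAbs n (j - i) ∈ S)

/-- `s` is an independent set of C_n(S). -/
def IsIndep {n : ℕ} (S : Finset ℕ) (s : Finset (ZMod n)) : Prop :=
  ∀ x ∈ s, ∀ y ∈ s, x ≠ y → ¬ (circulant n S).Adj x y

/-- `s` is a maximal independent set of C_n(S). -/
def IsMaxIndep {n : ℕ} (S : Finset ℕ) (s : Finset (ZMod n)) : Prop :=
  IsIndep S s ∧ ∀ t : Finset (ZMod n), IsIndep S t → s ⊆ t → t = s

/-- The complement generating set S̄ = {1,…,⌊n/2⌋} \ S. -/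
def Sbar (n : ℕ) (S : Finset ℕ) : Finset ℕ := Finset.Icc 1 (n / 2) \ S

/- ----------------- auxiliary lemmas ----------------- -/

lemma card3_ne {α : Type*} [DecidableEq α] {x y z : α}
    (h : ({x, y, z} : Finset α).card = 3) : x ≠ y ∧ x ≠ z ∧ y ≠ z := by
  have hle : ∀ a b : α, ({a, b} : Finset α).card ≤ 2 := by
    intro a b
    have := Finset.card_insert_le a ({b} : Finset α)
    simpa using this
  refine ⟨?_, ?_, ?_⟩ <;> rintro rfl
  · have hsub : ({x, x, z} : Finset α) ⊆ {x, z} := by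
      intro t ht; simp at ht ⊢; tauto
    have h1 := Finset.card_le_card hsub
    have h2 := hle x z; omega
  · have hsub : ({x, y, x} : Finset α) ⊆ {x, y} := by
      intro t ht; simp at ht ⊢; tauto
    have h1 := Finset.card_le_card hsub
    have h2 := hle x y; omega
  · have hsub : ({x, y, y} : Finset α) ⊆ {x, y} := by
      intro t ht; simp at ht ⊢; tauto
    have h1 := Finset.card_le_card hsub
    have h2 := hle x y; omega

lemma redAbs_neg {n : ℕ} [NeZero n] (x : ZMod n) : redAbs n (-x) = redAbs n x := by
  unfold redAbs
  rcases eq_or_ne x 0 with rfl | hx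
  · simp
  · have h1 : x.val < n := ZMod.val_lt x
    have h2 : (-x).val = n - x.val := by
      rw [ZMod.neg_val, if_neg hx]
    have h3 : x.val ≠ 0 := fun h => hx ((ZMod.val_eq_zero x).mp h)
    rw [h2]
    omega

lemma redAbs_inj {n : ℕ} [NeZero n] {x y : ZMod n}
    (h : redAbs n x = redAbs n y) : y = x ∨ y = -x := by
  have hx : x.val < n := ZMod.val_lt x
  have hy : y.val < n := ZMod.val_lt y
  unfold redAbs at h
  rcases eq_or_ne y.val x.val with he | hne
  · exact Or.inl (ZMod.val_injective n he)
  · have key : y.val = n - x.val ∧ x.val ≠ 0 := by omega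
    right
    apply ZMod.val_injective n
    have hx0 : x ≠ 0 := fun h0 => key.2 (by rw [h0]; simp)
    rw [ZMod.neg_val, if_neg hx0, key.1]

/-- the orbit of a triangle under translations by its own elements -/
def orbitMap {n : ℕ} (F : Finset (ZMod n)) : Finset (Finset (ZMod n)) :=
  F.image (fun c => F.image (fun x => x - c))

lemma mem_orbitMap {n : ℕ} {F G : Finset (ZMod n)} :
    G ∈ orbitMap F ↔ ∃ c ∈ F, F.image (fun x => x - c) = G :=
  Finset.mem_image

lemma orbitMap_invariant {n : ℕ} (F G : Finset (ZMod n)) (hG : G ∈ orbitMap F) :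
    orbitMap G = orbitMap F := by
  obtain ⟨c, hc, rfl⟩ := mem_orbitMap.mp hG
  unfold orbitMap
  rw [Finset.image_image]
  apply Finset.image_congr
  intro x hx
  simp only [Function.comp]
  rw [Finset.image_image]
  apply Finset.image_congr
  intro y hy
  simp only [Function.comp]
  ring

open Finset in
lemma three_dvd_aux (n : ℕ) [NeZero n] (S : Finset ℕ) :
    3 ∣ Set.ncard {F : Finset (ZMod n) |
      F.card = 3 ∧
      (∃ a b : ZMod n, F = {0, a, b} ∧ redAbs n a ∈ Sbar n S ∧
        redAbs n b ∈ Sbar n S ∧ redAbs n (b - a) ∈ Sbar n S) ∧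
      ¬ ∃ a b : ZMod n, F = {0, a, b} ∧ redAbs n a = redAbs n b ∧
        redAbs n b = redAbs n (b - a)} := by
  classical
  have hset : {F : Finset (ZMod n) |
      F.card = 3 ∧
      (∃ a b : ZMod n, F = {0, a, b} ∧ redAbs n a ∈ Sbar n S ∧
        redAbs n b ∈ Sbar n S ∧ redAbs n (b - a) ∈ Sbar n S) ∧
      ¬ ∃ a b : ZMod n, F = {0, a, b} ∧ redAbs n a = redAbs n b ∧
        redAbs n b = redAbs n (b - a)} =
      ↑(Finset.univ.filter (fun F : Finset (ZMod n) =>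
      F.card = 3 ∧
      (∃ a b : ZMod n, F = {0, a, b} ∧ redAbs n a ∈ Sbar n S ∧
        redAbs n b ∈ Sbar n S ∧ redAbs n (b - a) ∈ Sbar n S) ∧
      ¬ ∃ a b : ZMod n, F = {0, a, b} ∧ redAbs n a = redAbs n b ∧
        redAbs n b = redAbs n (b - a))) := by
    ext F; simp
  rw [hset, Set.ncard_coe_finset]
  set T := Finset.univ.filter (fun F : Finset (ZMod n) =>
      F.card = 3 ∧
      (∃ a b : ZMod n, F = {0, a, b} ∧ redAbs n a ∈ Sbar n S ∧
        redAbs n b ∈ Sbar n S ∧ redAbs n (b - a) ∈ Sbar n S) ∧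
      ¬ ∃ a b : ZMod n, F = {0, a, b} ∧ redAbs n a = redAbs n b ∧
        redAbs n b = redAbs n (b - a)) with hT
  have hmem : ∀ F : Finset (ZMod n), F ∈ T ↔
      (F.card = 3 ∧
      (∃ a b : ZMod n, F = {0, a, b} ∧ redAbs n a ∈ Sbar n S ∧
        redAbs n b ∈ Sbar n S ∧ redAbs n (b - a) ∈ Sbar n S) ∧
      ¬ ∃ a b : ZMod n, F = {0, a, b} ∧ redAbs n a = redAbs n b ∧
        redAbs n b = redAbs n (b - a)) := by
    intro F; rw [hT]; simp only [Finset.mem_filter, Finset.mem_univ, true_and]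
  -- structured elimination
  have hPelim : ∀ F : Finset (ZMod n), F ∈ T →
      ∃ a b : ZMod n, F = {0, a, b} ∧ a ≠ 0 ∧ b ≠ 0 ∧ a ≠ b ∧
      redAbs n a ∈ Sbar n S ∧ redAbs n b ∈ Sbar n S ∧ redAbs n (b - a) ∈ Sbar n S := by
    intro F hF
    rw [hmem] at hF
    obtain ⟨hcard, ⟨a, b, hFe, ha, hb, hab⟩, -⟩ := hF
    obtain ⟨h1, h2, h3⟩ := card3_ne (show ({0, a, b} : Finset (ZMod n)).card = 3 by
      rw [← hFe]; exact hcard)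
    exact ⟨a, b, hFe, Ne.symm h1, Ne.symm h2, h3, ha, hb, hab⟩
  -- equilateral characterization
  have hequi : ∀ G : Finset (ZMod n), G.card = 3 →
      (∃ x y : ZMod n, G = {0, x, y} ∧ redAbs n x = redAbs n y ∧
        redAbs n y = redAbs n (y - x)) →
      ∃ x : ZMod n, G = {0, x, -x} ∧ x + x + x = 0 ∧ x ≠ 0 := by
    intro G hcard hcon
    obtain ⟨x, y, hGe, e1, e2⟩ := hcon
    obtain ⟨h1, h2, h3⟩ := card3_ne (show ({0, x, y} : Finset (ZMod n)).card = 3 by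
      rw [← hGe]; exact hcard)
    rcases redAbs_inj e1 with h | h
    · exact absurd h (Ne.symm h3)
    · subst h
      rcases redAbs_inj e2 with h | h
      · exact absurd (show x = 0 by linear_combination -h) (Ne.symm h1)
      · exact ⟨x, hGe, by linear_combination -h, Ne.symm h1⟩
  -- closure of T under orbitMap
  have hclosure : ∀ F ∈ T, ∀ G ∈ orbitMap F, G ∈ T := by
    intro F hFT G hG
    have hcard : F.card = 3 := ((hmem F).mp hFT).1
    have hne := ((hmem F).mp hFT).2.2
    obtain ⟨a, b, hFe, ha0, hb0, hab, hSa, hSb, hSba⟩ := hPelim F hFT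
    obtain ⟨c, hc, rfl⟩ := mem_orbitMap.mp hG
    have hinj : Function.Injective (fun x : ZMod n => x - c) := by
      intro u v h
      simpa using congrArg (· + c) h
    have hGcard : (F.image (fun x => x - c)).card = 3 := by
      rw [Finset.card_image_of_injective _ hinj, hcard]
    have himg : F.image (fun x => x - c) = {0 - c, a - c, b - c} := by
      rw [hFe]; simp
    rw [hmem]
    refine ⟨hGcard, ?_, ?_⟩
    · -- the translated triangle is again a triangle through 0
      rw [hFe] at hc
      simp only [Finset.mem_insert, Finset.mem_singleton] at hc
      rcases hc with hc | hc | hc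
      · exact ⟨a, b, by rw [hc, hFe]; simp, hSa, hSb, hSba⟩
      · rw [hc] at himg
        refine ⟨-a, b - a, ?_, ?_, hSba, ?_⟩
        · rw [hc, himg]; ext t; simp [sub_self, zero_sub]; tauto
        · rwa [redAbs_neg]
        · have e : b - a - -a = b := by ring
          rw [e]; exact hSb
      · rw [hc] at himg
        refine ⟨a - b, -b, ?_, ?_, ?_, ?_⟩
        · rw [hc, himg]; ext t; simp [sub_self, zero_sub]; tauto
        · have e : a - b = -(b - a) := by ring
          rw [e, redAbs_neg]; exact hSba
        · rwa [redAbs_neg]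
        · have e : -b - (a - b) = -a := by ring
          rw [e, redAbs_neg]; exact hSa
    · -- the translated triangle is not equilateral
      intro hcon
      obtain ⟨x, hGx, h3x, hx0⟩ := hequi _ hGcard hcon
      have hFG : F = (F.image (fun x => x - c)).image (fun x => x + c) := by
        rw [Finset.image_image]
        have e : ((fun x : ZMod n => x + c) ∘ (fun x : ZMod n => x - c)) = id := by
          funext t; simp
        rw [e, Finset.image_id]
      rw [hGx] at hFG
      have hFe2 : F = {c, x + c, -x + c} := by
        rw [hFG]; simp [Finset.image_insert]
      have h0F : (0 : ZMod n) ∈ F := by rw [hFe]; simp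
      rw [hFe2] at h0F
      simp only [Finset.mem_insert, Finset.mem_singleton] at h0F
      apply hne
      rcases h0F with hc0 | hc0 | hc0
      · refine ⟨x, -x, ?_, (redAbs_neg x).symm, ?_⟩
        · rw [hFe2, ← hc0]; simp
        · have e : -x - x = x := by linear_combination -h3x
          rw [e, redAbs_neg]
      · have hc' : c = -x := by linear_combination -hc0
        refine ⟨-x, x, ?_, redAbs_neg x, ?_⟩
        · rw [hFe2, hc']
          have e1 : x + -x = (0 : ZMod n) := by ring
          have e2 : -x + -x = x := by linear_combination -h3x
          rw [e1, e2]
          ext t; simp; tauto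
        · have e : x - -x = -x := by linear_combination h3x
          rw [e, redAbs_neg]
      · have hc' : c = x := by linear_combination -hc0
        refine ⟨x, -x, ?_, (redAbs_neg x).symm, ?_⟩
        · rw [hFe2, hc']
          have e1 : -x + x = (0 : ZMod n) := by ring
          have e2 : x + x = -x := by linear_combination h3x
          rw [e1, e2]
          ext t; simp; tauto
        · have e : -x - x = x := by linear_combination -h3x
          rw [e, redAbs_neg]
  -- each orbit has exactly three elements
  have hfcard : ∀ F ∈ T, (orbitMap F).card = 3 := by
    intro F hFT
    have hne := ((hmem F).mp hFT).2.2
    obtain ⟨a, b, hFe, ha0, hb0, hab, -, -, -⟩ := hPelim F hFT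
    have final : b = a + a → a + a + a = 0 → False := by
      intro hb2a h3a
      apply hne
      have hbn : b = -a := by linear_combination hb2a + h3a
      refine ⟨a, b, hFe, ?_, ?_⟩
      · rw [hbn]; exact (redAbs_neg a).symm
      · have hba : b - a = a := by linear_combination hb2a
        rw [hba, hbn, redAbs_neg]
    have d1 : F.image (fun x => x - a) ≠ F := by
      intro h
      have m1 : -a ∈ F := by
        have h0 : (0 : ZMod n) - a ∈ F.image (fun x => x - a) :=
          Finset.mem_image_of_mem _ (by rw [hFe]; simp)
        rw [h, zero_sub] at h0; exact h0
      have m2 : b - a ∈ F := by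
        have h0 : b - a ∈ F.image (fun x => x - a) :=
          Finset.mem_image_of_mem _ (by rw [hFe]; simp)
        rwa [h] at h0
      rw [hFe] at m1 m2
      simp only [Finset.mem_insert, Finset.mem_singleton] at m1 m2
      have hb2a : b = a + a := by
        rcases m2 with h2 | h2 | h2
        · exact absurd (show b = a by linear_combination h2) hab.symm
        · linear_combination h2
        · exact absurd (show a = 0 by linear_combination -h2) ha0
      have h3a : a + a + a = 0 := by
        rcases m1 with h1 | h1 | h1
        · exact absurd (show a = 0 by linear_combination -h1) ha0
        · exact absurd (show b = 0 by linear_combination hb2a - h1) hb0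
        · linear_combination -h1 - hb2a
      exact final hb2a h3a
    have d2 : F.image (fun x => x - b) ≠ F := by
      intro h
      have m1 : -b ∈ F := by
        have h0 : (0 : ZMod n) - b ∈ F.image (fun x => x - b) :=
          Finset.mem_image_of_mem _ (by rw [hFe]; simp)
        rw [h, zero_sub] at h0; exact h0
      have m2 : a - b ∈ F := by
        have h0 : a - b ∈ F.image (fun x => x - b) :=
          Finset.mem_image_of_mem _ (by rw [hFe]; simp)
        rwa [h] at h0
      rw [hFe] at m1 m2
      simp only [Finset.mem_insert, Finset.mem_singleton] at m1 m2
      have ha2b : a = b + b := by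
        rcases m2 with h2 | h2 | h2
        · exact absurd (show a = b by linear_combination h2) hab
        · exact absurd (show b = 0 by linear_combination -h2) hb0
        · linear_combination h2
      have h3b : b + b + b = 0 := by
        rcases m1 with h1 | h1 | h1
        · exact absurd (show b = 0 by linear_combination -h1) hb0
        · linear_combination -h1 - ha2b
        · exact absurd (show a = 0 by linear_combination ha2b - h1) ha0
      apply hne
      have han : a = -b := by linear_combination ha2b + h3b
      refine ⟨a, b, hFe, ?_, ?_⟩
      · rw [han, redAbs_neg]
      · have hba : b - a = -b := by linear_combination -ha2b
        rw [hba, redAbs_neg]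
    have d3 : F.image (fun x => x - a) ≠ F.image (fun x => x - b) := by
      intro h
      have key : ∀ e ∈ F, e - a + b ∈ F := by
        intro e he
        have h1 : e - a ∈ F.image (fun x => x - b) := by
          rw [← h]; exact Finset.mem_image_of_mem _ he
        obtain ⟨e', he', heq⟩ := Finset.mem_image.mp h1
        have he2 : e' = e - a + b := by linear_combination heq
        rwa [← he2]
      have m1 : (0 : ZMod n) - a + b ∈ F := key 0 (by rw [hFe]; simp)
      have m2 : b - a + b ∈ F := key b (by rw [hFe]; simp)
      rw [hFe] at m1 m2
      simp only [Finset.mem_insert, Finset.mem_singleton] at m1 m2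
      have hb2a : b = a + a := by
        rcases m1 with h1 | h1 | h1
        · exact absurd (show b = a by linear_combination h1) hab.symm
        · linear_combination h1
        · exact absurd (show a = 0 by linear_combination -h1) ha0
      have h3a : a + a + a = 0 := by
        rcases m2 with h2 | h2 | h2
        · linear_combination h2 - hb2a - hb2a
        · exact absurd (show b = 0 by linear_combination hb2a + h2 - hb2a - hb2a) hb0
        · exact absurd (show a = 0 by linear_combination h2 - hb2a) ha0
      exact final hb2a h3a
    have himg : orbitMap F =
        Finset.image (fun c => F.image (fun x => x - c)) {0, a, b} := by
      rw [← hFe]; rfl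
    have hid : F.image (fun x => x - (0 : ZMod n)) = F := by simp
    rw [himg, Finset.image_insert, Finset.image_insert, Finset.image_singleton, hid]
    rw [Finset.card_insert_of_notMem, Finset.card_insert_of_notMem,
      Finset.card_singleton]
    · simpa using d3
    · simp only [Finset.mem_insert, Finset.mem_singleton]
      push_neg
      exact ⟨fun h => d1 h.symm, fun h => d2 h.symm⟩
  -- each triangle lies in its own orbit
  have hself : ∀ F ∈ T, F ∈ orbitMap F := by
    intro F hFT
    obtain ⟨a, b, hFe, -, -, -, -, -, -⟩ := hPelim F hFT
    have h0 : (0 : ZMod n) ∈ F := by rw [hFe]; simp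
    have hid : F.image (fun x => x - (0 : ZMod n)) = F := by simp
    exact mem_orbitMap.mpr ⟨0, h0, hid⟩
  -- fiberwise counting
  rw [Finset.card_eq_sum_card_fiberwise (f := orbitMap) (t := T.image orbitMap)
      (fun x hx => Finset.mem_image_of_mem _ hx)]
  have hfib : ∀ v ∈ T.image orbitMap,
      (T.filter (fun G => orbitMap G = v)).card = 3 := by
    intro v hv
    obtain ⟨F, hF, rfl⟩ := Finset.mem_image.mp hv
    have hTF : T.filter (fun G => orbitMap G = orbitMap F) = orbitMap F := by
      ext G
      simp only [Finset.mem_filter]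
      constructor
      · rintro ⟨hGT, hGf⟩
        rw [← hGf]
        exact hself G hGT
      · intro hG
        exact ⟨hclosure F hF G hG, orbitMap_invariant F G hG⟩
    rw [hTF, hfcard F hF]
  rw [Finset.sum_congr rfl hfib, Finset.sum_const, smul_eq_mul]
  exact dvd_mul_left 3 _

theorem three_dvd_card_T (n : ℕ) (S : Finset ℕ)
    (hdim : (∃ s : Finset (ZMod n), IsIndep S s ∧ s.card = 3) ∧
            ∀ s : Finset (ZMod n), IsIndep S s → s.card ≤ 3) :
    3 ∣ Set.ncard {F : Finset (ZMod n) |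
      F.card = 3 ∧
      (∃ a b : ZMod n, F = {0, a, b} ∧ redAbs n a ∈ Sbar n S ∧
        redAbs n b ∈ Sbar n S ∧ redAbs n (b - a) ∈ Sbar n S) ∧
      ¬ ∃ a b : ZMod n, F = {0, a, b} ∧ redAbs n a = redAbs n b ∧
        redAbs n b = redAbs n (b - a)} := by
  rcases Nat.eq_zero_or_pos n with hn | hn
  · subst hn
    have hempty : {F : Finset (ZMod 0) |
      F.card = 3 ∧
      (∃ a b : ZMod 0, F = {0, a, b} ∧ redAbs 0 a ∈ Sbar 0 S ∧
        redAbs 0 b ∈ Sbar 0 S ∧ redAbs 0 (b - a) ∈ Sbar 0 S) ∧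
      ¬ ∃ a b : ZMod 0, F = {0, a, b} ∧ redAbs 0 a = redAbs 0 b ∧
        redAbs 0 b = redAbs 0 (b - a)} = ∅ := by
      ext F
      simp only [Set.mem_setOf_eq, Set.mem_empty_iff_false, iff_false]
      rintro ⟨-, ⟨a, b, -, ha, -, -⟩, -⟩
      simp only [Sbar, Finset.mem_sdiff, Finset.mem_Icc] at ha
      obtain ⟨⟨h1, h2⟩, -⟩ := ha
      omega
    rw [hempty, Set.ncard_empty]
    exact dvd_zero 3
  · haveI : NeZero n := ⟨hn.ne'⟩
    exact three_dvd_aux n S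
end

section
/- Let Δ be a pure 2-dimensional connected simplicial complex on n vertices and let v_1, …, v_{n−3} be a sequence of distinct vertices. Define Δ_0 = Δ and Δ_i = del_{Δ_{i−1}}(v_i). Then Δ is vertex decomposable via this sequence if and only if: (1) for each i, link_{Δ_{i−1}}(v_i) is a connected 1-dimensional simplicial complex, and (2) Δ_{n−3} is the full simplex on the remaining 3 vertices. -/
/-!
Each shedding vertex `v_i` of a pure 2-dimensional complex has a pure 1-dimensional link, i.e. a
graph, and such a complex is vertex decomposable exactly when it is connected. A connected graph
sheds a vertex whose removal keeps it connected; the link of that vertex is a set of points,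
which is always decomposable. Conversely, along a vertex decomposition of a pure complex of
positive dimension each deletion stays pure, hence connected by induction, and the shed vertex
is joined to it by an edge of one of its facets.

The shedding condition "every facet of `del v` is a facet" holds as soon as the complex and its
deletion are pure of the same dimension. Purity is inherited by deletions along a decomposition,
and for the converse it propagates backwards from the final triangle: if `del v` is pure
2-dimensional and `link v` pure 1-dimensional (as a connected graph with an edge is), the complex
is pure 2-dimensional. The final simplex is a pure 2-dimensional face avoiding the
`n - 3` deleted vertices, so it is the triangle on the other three.
-/

/-- An abstract simplicial complex on vertex type `V` (faces closed under subsets). -/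
structure SC (V : Type) where
  faces : Set (Finset V)
  down_closed : ∀ ⦃s t : Finset V⦄, s ∈ faces → t ⊆ s → t ∈ faces

variable {V : Type} [DecidableEq V]

/-- The deletion of a vertex. -/
def SC.del (Δ : SC V) (x : V) : SC V where
  faces := {F | x ∉ F ∧ F ∈ Δ.faces}
  down_closed := fun s t hs hts =>
    ⟨fun h => hs.1 (hts h), Δ.down_closed hs.2 hts⟩

/-- The link of a vertex. -/
def SC.link (Δ : SC V) (x : V) : SC V where
  faces := {F | x ∉ F ∧ insert x F ∈ Δ.faces}
  down_closed := fun s t hs hts =>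
    ⟨fun h => hs.1 (hts h), Δ.down_closed hs.2 (Finset.insert_subset_insert x hts)⟩

/-- A facet: a maximal face. -/
def SC.facet (Δ : SC V) (F : Finset V) : Prop :=
  F ∈ Δ.faces ∧ ∀ G ∈ Δ.faces, F ⊆ G → F = G

/-- The 1-skeleton graph of a simplicial complex, on its vertex set. -/
def SC.skeleton (Δ : SC V) : SimpleGraph {v : V // ({v} : Finset V) ∈ Δ.faces} :=
  SimpleGraph.fromRel (fun u v => ({u.1, v.1} : Finset V) ∈ Δ.faces)

/-- Connectivity of a simplicial complex (connectivity of its 1-skeleton). -/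
def SC.Conn (Δ : SC V) : Prop := Δ.skeleton.Connected

/-- Vertex decomposability. -/
inductive VD : SC V → Prop
  | point (Δ : SC V) : Δ.faces = {∅} → VD Δ
  | simplex (Δ : SC V) (F : Finset V) : Δ.faces = {s : Finset V | s ⊆ F} → VD Δ
  | shed (Δ : SC V) (x : V) : ({x} : Finset V) ∈ Δ.faces →
      VD (Δ.link x) → VD (Δ.del x) →
      (∀ F : Finset V, (Δ.del x).facet F → Δ.facet F) → VD Δ

/-- Vertex decomposability via a prescribed sequence of shedding vertices. -/
inductive VDvia : SC V → List V → Prop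
  | point (Δ : SC V) : Δ.faces = {∅} → VDvia Δ []
  | simplex (Δ : SC V) (F : Finset V) : Δ.faces = {s : Finset V | s ⊆ F} → VDvia Δ []
  | shed (Δ : SC V) (x : V) (xs : List V) : ({x} : Finset V) ∈ Δ.faces →
      VD (Δ.link x) → VDvia (Δ.del x) xs →
      (∀ F : Finset V, (Δ.del x).facet F → Δ.facet F) → VDvia Δ (x :: xs)

/-- Iterated deletion along a list of vertices. -/
def delSeq (Δ : SC V) : List V → SC V
  | [] => Δ
  | x :: xs => delSeq (Δ.del x) xs

open Finset

namespace SC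

variable {α : Type} {Δ Γ : SC α} {x y : α} {k : ℕ}

/-- Pure of dimension `k - 1`. -/
def IsPure (Δ : SC α) (k : ℕ) : Prop := ∀ F, Δ.facet F → F.card = k

theorem del_faces_subset : (Δ.del x).faces ⊆ Δ.faces := fun _ hF => hF.2

theorem singleton_mem_del {v : α} :
    ({v} : Finset α) ∈ (Δ.del x).faces ↔ v ≠ x ∧ {v} ∈ Δ.faces := by
  simp [del, eq_comm]

theorem faces_eq_of_forall_vertex_mem {R : Finset α} (hR : R ∈ Δ.faces)
    (h : ∀ v, ({v} : Finset α) ∈ Δ.faces → v ∈ R) : Δ.faces = {s | s ⊆ R} := by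
  ext s
  exact ⟨fun hs v hv => h v (Δ.down_closed hs (singleton_subset_iff.2 hv)),
    fun hs => Δ.down_closed hR hs⟩

theorem facet_of_faces_eq {R : Finset α} (h : Δ.faces = {s | s ⊆ R}) : Δ.facet R := by
  rw [facet, h]
  exact ⟨(subset_rfl : R ⊆ R), fun G hG hRG => subset_antisymm hRG hG⟩

theorem isPure_of_faces_eq {R : Finset α} (h : Δ.faces = {s | s ⊆ R}) : Δ.IsPure R.card := by
  intro F hF
  have hFR : F ⊆ R := by simpa [h] using hF.1
  rw [hF.2 R (facet_of_faces_eq h).1 hFR]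

theorem exists_facet_superset [Finite α] {F : Finset α} (hF : F ∈ Δ.faces) :
    ∃ G, Δ.facet G ∧ F ⊆ G := by
  obtain ⟨G, hFG, hG⟩ := Finite.exists_le_maximal (p := (· ∈ Δ.faces)) hF
  exact ⟨G, ⟨hG.1, fun H hH hGH => le_antisymm hGH (hG.2 hH hGH)⟩, hFG⟩

theorem IsPure.card_le [Finite α] (hp : Δ.IsPure k) {F : Finset α} (hF : F ∈ Δ.faces) :
    F.card ≤ k := by
  obtain ⟨G, hG, hFG⟩ := exists_facet_superset hF
  exact hp G hG ▸ card_le_card hFG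

theorem IsPure.exists_superset [Finite α] (hp : Δ.IsPure k) {F : Finset α}
    (hF : F ∈ Δ.faces) : ∃ G ∈ Δ.faces, F ⊆ G ∧ G.card = k := by
  obtain ⟨G, hG, hFG⟩ := exists_facet_superset hF
  exact ⟨G, hG.1, hFG, hp G hG⟩

theorem facet_of_facet_del (hle : ∀ F ∈ Δ.faces, F.card ≤ k) (hdel : (Δ.del x).IsPure k)
    {F : Finset α} (hF : (Δ.del x).facet F) : Δ.facet F :=
  ⟨hF.1.2, fun G hG hFG => eq_of_subset_of_card_le hFG (hdel F hF ▸ hle G hG)⟩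

variable [DecidableEq α]

def IsConnectedGraph (Δ : SC α) : Prop :=
  (∀ F ∈ Δ.faces, F.card ≤ 2) ∧ (∃ F ∈ Δ.faces, F.card = 2) ∧ Δ.Conn

theorem empty_mem_link (hx : ({x} : Finset α) ∈ Δ.faces) : ∅ ∈ (Δ.link x).faces :=
  ⟨notMem_empty x, by simpa using hx⟩

theorem card_le_of_mem_link (hle : ∀ F ∈ Δ.faces, F.card ≤ k + 1) {F : Finset α}
    (hF : F ∈ (Δ.link x).faces) : F.card ≤ k := by
  have := hle _ hF.2
  rw [card_insert_of_notMem hF.1] at this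
  omega

theorem IsPure.link (hp : Δ.IsPure (k + 1)) : (Δ.link x).IsPure k := by
  rintro F ⟨⟨hxF, hF⟩, hmax⟩
  have hfacet : Δ.facet (insert x F) := by
    refine ⟨hF, fun G hG hFG => ?_⟩
    have hxG : x ∈ G := hFG (mem_insert_self x F)
    have hFG' : F ⊆ G.erase x := fun v hv =>
      mem_erase.2 ⟨fun e => hxF (e ▸ hv), hFG (mem_insert_of_mem hv)⟩
    rw [hmax _ ⟨notMem_erase x G, by rwa [insert_erase hxG]⟩ hFG', insert_erase hxG]
  have := hp _ hfacet
  rw [card_insert_of_notMem hxF] at this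
  omega

theorem IsPure.exists_link_face [Finite α] (hp : Δ.IsPure (k + 1))
    (hx : ({x} : Finset α) ∈ Δ.faces) : ∃ F ∈ (Δ.link x).faces, F.card = k := by
  obtain ⟨G, hG, hxG, hGk⟩ := hp.exists_superset hx
  have hxG' : x ∈ G := hxG (mem_singleton_self x)
  exact ⟨G.erase x, ⟨notMem_erase x G, by rwa [insert_erase hxG']⟩,
    by rw [card_erase_of_mem hxG', hGk, Nat.add_sub_cancel]⟩

theorem IsPure.of_del_link (hdel : (Δ.del x).IsPure (k + 1)) (hlink : (Δ.link x).IsPure k) :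
    Δ.IsPure (k + 1) := by
  intro F hF
  by_cases hxF : x ∈ F
  · have hfacet : (Δ.link x).facet (F.erase x) := by
      refine ⟨⟨notMem_erase x F, by rw [insert_erase hxF]; exact hF.1⟩, fun G hG hFG => ?_⟩
      have hFG' : F ⊆ insert x G := by
        rw [← insert_erase hxF]
        exact insert_subset_insert x hFG
      rw [hF.2 _ hG.2 hFG', erase_insert hG.1]
    rw [← insert_erase hxF, card_insert_of_notMem (notMem_erase x F), hlink _ hfacet]
  · exact hdel F ⟨⟨hxF, hF.1⟩, fun G hG hFG => hF.2 G hG.2 hFG⟩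

theorem skeleton_adj {a b : {v // ({v} : Finset α) ∈ Δ.faces}} :
    Δ.skeleton.Adj a b ↔ a.1 ≠ b.1 ∧ ({a.1, b.1} : Finset α) ∈ Δ.faces := by
  rw [skeleton, SimpleGraph.fromRel_adj, pair_comm b.1, or_self, Subtype.coe_ne_coe]

def skeletonHom (h : Γ.faces ⊆ Δ.faces) : Γ.skeleton →g Δ.skeleton where
  toFun a := ⟨a.1, h a.2⟩
  map_rel' hab := skeleton_adj.2 ⟨(skeleton_adj.1 hab).1, h (skeleton_adj.1 hab).2⟩

theorem conn_of_faces_eq {R : Finset α} (h : Δ.faces = {s | s ⊆ R}) (hR : R.Nonempty) :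
    Δ.Conn := by
  obtain ⟨v, hv⟩ := hR
  have : Nonempty {v // ({v} : Finset α) ∈ Δ.faces} := ⟨⟨v, by simpa [h] using hv⟩⟩
  have htop : Δ.skeleton = ⊤ := by
    ext a b
    have ha : a.1 ∈ R := by simpa [h] using a.2
    have hb : b.1 ∈ R := by simpa [h] using b.2
    simp [skeleton_adj, h, insert_subset_iff, ha, hb, Subtype.coe_ne_coe]
  rw [Conn, htop]
  exact SimpleGraph.connected_top

theorem conn_of_conn_del (hdel : (Δ.del x).Conn) (hxy : ({x, y} : Finset α) ∈ Δ.faces)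
    (hne : x ≠ y) : Δ.Conn := by
  have hy : ({y} : Finset α) ∈ (Δ.del x).faces :=
    singleton_mem_del.2 ⟨hne.symm, Δ.down_closed hxy (by simp)⟩
  rw [Conn, SimpleGraph.connected_iff_exists_forall_reachable]
  refine ⟨⟨y, hy.2⟩, fun w => ?_⟩
  by_cases hw : w.1 = x
  · refine (skeleton_adj.2 ⟨?_, ?_⟩).reachable
    · exact hw ▸ hne.symm
    · rwa [hw, pair_comm]
  · exact (hdel.preconnected ⟨y, hy⟩ ⟨w.1, singleton_mem_del.2 ⟨hw, w.2⟩⟩).map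
      (skeletonHom del_faces_subset)

theorem conn_del_of_connected_induce {x : {v // ({v} : Finset α) ∈ Δ.faces}}
    (h : (Δ.skeleton.induce {x}ᶜ).Connected) : (Δ.del x.1).Conn := by
  have hne : ∀ a : ({x}ᶜ : Set _), a.1.1 ≠ x.1 := fun a e => a.2 (Subtype.ext e)
  let f : Δ.skeleton.induce {x}ᶜ →g (Δ.del x.1).skeleton :=
    { toFun := fun a => ⟨a.1.1, singleton_mem_del.2 ⟨hne a, a.1.2⟩⟩
      map_rel' := fun {a b} hab => by
        obtain ⟨hab, hface⟩ := skeleton_adj.1 hab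
        refine skeleton_adj.2 ⟨hab, ?_, hface⟩
        simp [(hne a).symm, (hne b).symm] }
  refine h.map f fun v => ?_
  obtain ⟨hvx, hv⟩ := singleton_mem_del.1 v.2
  exact ⟨⟨⟨v.1, hv⟩, fun e => hvx (congrArg Subtype.val e)⟩, rfl⟩

theorem Conn.exists_edge (hc : Δ.Conn) {a b v : α} (ha : ({a} : Finset α) ∈ Δ.faces)
    (hb : ({b} : Finset α) ∈ Δ.faces) (hab : a ≠ b) (hv : ({v} : Finset α) ∈ Δ.faces) :
    ∃ w, v ≠ w ∧ ({v, w} : Finset α) ∈ Δ.faces := by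
  have := nontrivial_of_ne (⟨a, ha⟩ : {v // ({v} : Finset α) ∈ Δ.faces}) ⟨b, hb⟩
    (by simpa using hab)
  obtain ⟨w, hw⟩ := hc.preconnected.exists_adj_of_nontrivial ⟨v, hv⟩
  exact ⟨w.1, skeleton_adj.1 hw⟩

theorem isConnectedGraph_of_conn (hle : ∀ F ∈ Δ.faces, F.card ≤ 2) (hc : Δ.Conn) {a b : α}
    (ha : ({a} : Finset α) ∈ Δ.faces) (hb : ({b} : Finset α) ∈ Δ.faces) (hab : a ≠ b) :
    Δ.IsConnectedGraph := by
  obtain ⟨w, haw, hw⟩ := hc.exists_edge ha hb hab ha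
  exact ⟨hle, ⟨_, hw, card_pair haw⟩, hc⟩

theorem IsConnectedGraph.isPure (h : Δ.IsConnectedGraph) : Δ.IsPure 2 := by
  obtain ⟨hle, ⟨E, hE, hE2⟩, hc⟩ := h
  obtain ⟨a, b, hab, rfl⟩ := card_eq_two.1 hE2
  intro F hF
  obtain h0 | h1 | h2 : F.card = 0 ∨ F.card = 1 ∨ F.card = 2 := by
    have := hle F hF.1
    omega
  · rw [hF.2 _ hE (by simp [card_eq_zero.1 h0])]
    exact hE2
  · obtain ⟨v, rfl⟩ := card_eq_one.1 h1
    obtain ⟨w, hvw, hw⟩ := hc.exists_edge (Δ.down_closed hE (by simp))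
      (Δ.down_closed hE (by simp)) hab hF.1
    rw [hF.2 _ hw (by simp)]
    exact card_pair hvw
  · exact h2

end SC

section

open SC

variable {α : Type} [DecidableEq α] {Δ : SC α} {k : ℕ}

theorem vd_of_shedding [Finite α] (P : SC α → Prop)
    (hP : ∀ Δ, P Δ → (∃ R, Δ.faces = {s | s ⊆ R}) ∨
      ∃ x, ({x} : Finset α) ∈ Δ.faces ∧ VD (Δ.link x) ∧ P (Δ.del x) ∧
        ∀ F, (Δ.del x).facet F → Δ.facet F) :
    P Δ → VD Δ := by
  suffices ∀ m (Δ : SC α), Δ.faces.ncard = m → P Δ → VD Δ from this _ Δ rfl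
  intro m
  induction m using Nat.strong_induction_on with
  | _ m ih =>
    rintro Δ rfl hΔ
    obtain ⟨R, hR⟩ | ⟨x, hx, hlink, hdel, hfacets⟩ := hP Δ hΔ
    · exact VD.simplex Δ R hR
    · have hlt : (Δ.del x).faces.ncard < Δ.faces.ncard :=
        Set.ncard_lt_ncard ⟨del_faces_subset, fun h => (h hx).1 (mem_singleton_self x)⟩
      exact VD.shed Δ x hx hlink (ih _ hlt _ rfl hdel) hfacets

theorem vd_of_card_le_one [Finite α] (hle : ∀ F ∈ Δ.faces, F.card ≤ 1)
    (h0 : ∅ ∈ Δ.faces) : VD Δ := by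
  refine vd_of_shedding (fun Δ => (∀ F ∈ Δ.faces, F.card ≤ 1) ∧ ∅ ∈ Δ.faces)
    (fun Δ ⟨hle, h0⟩ => ?_) ⟨hle, h0⟩
  by_cases hv : ∃ x, ({x} : Finset α) ∈ Δ.faces
  swap
  · exact Or.inl ⟨∅, faces_eq_of_forall_vertex_mem h0 fun v hv' => (hv ⟨v, hv'⟩).elim⟩
  obtain ⟨x, hx⟩ := hv
  by_cases hy : ∃ y, y ≠ x ∧ ({y} : Finset α) ∈ Δ.faces
  swap
  · exact Or.inl ⟨{x}, faces_eq_of_forall_vertex_mem hx fun v hv =>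
      mem_singleton.2 (not_not.1 fun hvx => hy ⟨v, hvx, hv⟩)⟩
  obtain ⟨y, hyx, hy⟩ := hy
  have hlink : (Δ.link x).faces = {∅} := by
    ext F
    refine ⟨fun hF => card_eq_zero.1 (Nat.le_zero.1 (card_le_of_mem_link hle hF)), ?_⟩
    rintro rfl
    exact empty_mem_link hx
  have hdel : (Δ.del x).IsPure 1 := fun F hF => by
    refine le_antisymm (hle F hF.1.2) (card_pos.2 (nonempty_iff_ne_empty.2 ?_))
    rintro rfl
    exact singleton_ne_empty y (hF.2 _ (singleton_mem_del.2 ⟨hyx, hy⟩) (empty_subset _)).symm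
  exact Or.inr ⟨x, hx, VD.point _ hlink, ⟨fun F hF => hle F hF.2, notMem_empty x, h0⟩,
    fun F hF => facet_of_facet_del hle hdel hF⟩

theorem SC.IsConnectedGraph.vd [Finite α] (h : Δ.IsConnectedGraph) : VD Δ := by
  refine vd_of_shedding IsConnectedGraph (fun Δ h => ?_) h
  obtain ⟨hle, ⟨E, hE, hE2⟩, hc⟩ := h
  obtain ⟨a, b, hab, rfl⟩ := card_eq_two.1 hE2
  have ha : ({a} : Finset α) ∈ Δ.faces := Δ.down_closed hE (by simp)
  have hb : ({b} : Finset α) ∈ Δ.faces := Δ.down_closed hE (by simp)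
  by_cases hall : ∀ v, ({v} : Finset α) ∈ Δ.faces → v ∈ ({a, b} : Finset α)
  · exact Or.inl ⟨_, faces_eq_of_forall_vertex_mem hE hall⟩
  push Not at hall
  obtain ⟨c, hc', hcab⟩ := hall
  have hca : c ≠ a := fun e => hcab (by simp [e])
  have hcb : c ≠ b := fun e => hcab (by simp [e])
  have := nontrivial_of_ne (⟨a, ha⟩ : {v // ({v} : Finset α) ∈ Δ.faces}) ⟨b, hb⟩
    (by simpa using hab)
  obtain ⟨x, hx⟩ := hc.exists_connected_induce_compl_singleton_of_finite_nontrivial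
  obtain ⟨u, w, huw, hu, hw⟩ : ∃ u w, u ≠ w ∧ ({u} : Finset α) ∈ (Δ.del x.1).faces ∧
      ({w} : Finset α) ∈ (Δ.del x.1).faces := by
    simp only [singleton_mem_del]
    by_cases hxa : a = x.1
    · exact ⟨b, c, hcb.symm, ⟨fun e => hab (hxa.trans e.symm), hb⟩, ⟨hxa ▸ hca, hc'⟩⟩
    by_cases hxb : b = x.1
    · exact ⟨a, c, hca.symm, ⟨hxa, ha⟩, ⟨hxb ▸ hcb, hc'⟩⟩
    · exact ⟨a, b, hab, ⟨hxa, ha⟩, ⟨hxb, hb⟩⟩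
  have hdel : (Δ.del x.1).IsConnectedGraph := isConnectedGraph_of_conn
    (fun F hF => hle F hF.2) (conn_del_of_connected_induce hx) hu hw huw
  exact Or.inr ⟨x.1, x.2, vd_of_card_le_one (fun F hF => card_le_of_mem_link hle hF)
    (empty_mem_link x.2), hdel, fun F hF => facet_of_facet_del hle hdel.isPure hF⟩

theorem VD.conn_of_isPure [Finite α] (hk : 2 ≤ k) (hvd : VD Δ) (hp : Δ.IsPure k)
    (hne : ∃ F ∈ Δ.faces, F.Nonempty) : Δ.Conn := by
  induction hvd with
  | point _ h =>
    obtain ⟨F, hF, hFne⟩ := hne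
    rw [h, Set.mem_singleton_iff] at hF
    exact absurd (hF ▸ hFne) Finset.not_nonempty_empty
  | simplex _ R h =>
    obtain ⟨F, hF, hFne⟩ := hne
    rw [h] at hF
    exact conn_of_faces_eq h (hFne.mono hF)
  | shed Γ x hx _ _ hfacets _ ihdel =>
    obtain ⟨G, hG, hxG, hGk⟩ := hp.exists_superset hx
    obtain ⟨y, hyG, hyx⟩ := exists_mem_ne (by omega : 1 < G.card) x
    have hxy : ({x, y} : Finset α) ∈ Γ.faces := Γ.down_closed hG (insert_subset_iff.2
      ⟨hxG (mem_singleton_self x), singleton_subset_iff.2 hyG⟩)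
    have hy : ({y} : Finset α) ∈ (Γ.del x).faces :=
      singleton_mem_del.2 ⟨hyx, Γ.down_closed hxy (by simp)⟩
    have hdel : (Γ.del x).Conn :=
      ihdel (fun F hF => hp F (hfacets F hF)) ⟨_, hy, singleton_nonempty y⟩
    exact conn_of_conn_del hdel hxy hyx.symm

theorem SC.IsPure.isConnectedGraph_of_vd [Finite α] (hp : Δ.IsPure 2) (hvd : VD Δ)
    (hE : ∃ F ∈ Δ.faces, F.card = 2) : Δ.IsConnectedGraph := by
  obtain ⟨E, hE', hE2⟩ := hE
  exact ⟨fun F hF => hp.card_le hF, ⟨E, hE', hE2⟩,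
    hvd.conn_of_isPure le_rfl hp ⟨E, hE', card_pos.1 (by omega)⟩⟩

end

theorem mem_delSeq_faces {α : Type} {Δ : SC α} {L : List α} {F : Finset α} :
    F ∈ (delSeq Δ L).faces ↔ F ∈ Δ.faces ∧ ∀ v ∈ L, v ∉ F := by
  induction L generalizing Δ with
  | nil => simp [delSeq]
  | cons x xs ih =>
    simp only [delSeq, ih, SC.del, Set.mem_ofPred_eq, List.mem_cons, forall_eq_or_imp]
    tauto

section

open SC

variable {α : Type} [DecidableEq α]

/-- `delSeq Δ (L.take i)` is the paper's `Δ_i`, and `L.get i` its `v_{i+1}`. -/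
def LinksAlong (P : SC α → Prop) (Δ : SC α) (L : List α) : Prop :=
  ∀ i : Fin L.length, P ((delSeq Δ (L.take i)).link (L.get i))

theorem linksAlong_nil {P : SC α → Prop} {Δ : SC α} : LinksAlong P Δ [] :=
  fun i => i.elim0

theorem linksAlong_cons {P : SC α → Prop} {Δ : SC α} {x : α} {xs : List α} :
    LinksAlong P Δ (x :: xs) ↔ P (Δ.link x) ∧ LinksAlong P (Δ.del x) xs :=
  ⟨fun h => ⟨h ⟨0, xs.length.succ_pos⟩, fun i => h i.succ⟩,
    fun ⟨h0, h⟩ i => Fin.cases h0 h i⟩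

theorem LinksAlong.mono {P Q : SC α → Prop} (hPQ : ∀ Γ, P Γ → Q Γ) {Δ : SC α}
    {L : List α} (h : LinksAlong P Δ L) : LinksAlong Q Δ L :=
  fun i => hPQ _ (h i)

theorem VDvia.exists_delSeq_faces_eq {Δ : SC α} {L : List α} (h : VDvia Δ L) :
    ∃ R, (delSeq Δ L).faces = {s | s ⊆ R} := by
  induction h with
  | point _ h => exact ⟨∅, by rw [delSeq, h]; ext s; simp⟩
  | simplex _ R h => exact ⟨R, h⟩
  | shed _ _ _ _ _ _ _ ih => exact ih

theorem VDvia.isPure_delSeq {Δ : SC α} {L : List α} {k : ℕ} (h : VDvia Δ L)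
    (hp : Δ.IsPure k) : (delSeq Δ L).IsPure k := by
  induction h with
  | point => exact hp
  | simplex => exact hp
  | shed _ _ _ _ _ _ hfacets ih => exact ih fun F hF => hp F (hfacets F hF)

theorem VDvia.linksAlong [Finite α] {Δ : SC α} {L : List α} (h : VDvia Δ L)
    (hp : Δ.IsPure 3) : LinksAlong IsConnectedGraph Δ L := by
  induction h with
  | point => exact linksAlong_nil
  | simplex => exact linksAlong_nil
  | shed _ x _ hx hlink _ hfacets ih =>
    exact linksAlong_cons.2 ⟨hp.link.isConnectedGraph_of_vd hlink (hp.exists_link_face hx),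
      ih fun F hF => hp F (hfacets F hF)⟩

theorem isPure_of_linksAlong {k : ℕ} {R : Finset α} :
    ∀ {Δ : SC α} {L : List α}, LinksAlong (·.IsPure k) Δ L →
      (delSeq Δ L).faces = {s | s ⊆ R} → R.card = k + 1 → Δ.IsPure (k + 1)
  | _, [], _, hR, hRk => hRk ▸ isPure_of_faces_eq hR
  | _, _ :: _, h, hR, hRk =>
    (isPure_of_linksAlong (linksAlong_cons.1 h).2 hR hRk).of_del_link (linksAlong_cons.1 h).1

theorem vdvia_of_linksAlong [Finite α] {R : Finset α} (hR3 : R.card = 3) :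
    ∀ {Δ : SC α} {L : List α}, LinksAlong IsConnectedGraph Δ L →
      (delSeq Δ L).faces = {s | s ⊆ R} → VDvia Δ L
  | Δ, [], _, hR => VDvia.simplex Δ R hR
  | Δ, x :: xs, h, hR => by
    obtain ⟨hlink, hrest⟩ := linksAlong_cons.1 h
    have hdel : (Δ.del x).IsPure 3 :=
      isPure_of_linksAlong (hrest.mono fun _ => IsConnectedGraph.isPure) hR hR3
    have hΔ : Δ.IsPure 3 := hdel.of_del_link hlink.isPure
    obtain ⟨E, hE, -⟩ := hlink.2.1
    exact VDvia.shed Δ x xs (Δ.down_closed hE.2 (singleton_subset_iff.2 (mem_insert_self x E)))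
      hlink.vd (vdvia_of_linksAlong hR3 hrest hR)
      fun F hF => facet_of_facet_del (fun G hG => hΔ.card_le hG) hdel hF

end

theorem two_dim_vd_criterion_general {W : Type} [Fintype W] [DecidableEq W]
    (n : ℕ) (hcard : Fintype.card W = n) (Δ : SC W)
    (hpure : ∀ F : Finset W, Δ.facet F → F.card = 3)
    (hdim : ∃ F ∈ Δ.faces, F.card = 3)
    (L : List W) (hlen : L.length = n - 3) (hnodup : L.Nodup) :
    VDvia Δ L ↔
      ((∀ i : Fin L.length,
          (∀ F ∈ ((delSeq Δ (L.take i)).link (L.get i)).faces, F.card ≤ 2) ∧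
          (∃ F ∈ ((delSeq Δ (L.take i)).link (L.get i)).faces, F.card = 2) ∧
          ((delSeq Δ (L.take i)).link (L.get i)).Conn) ∧
        (delSeq Δ L).faces = {s : Finset W | s ⊆ Finset.univ \ L.toFinset}) := by
  have hremaining : (univ \ L.toFinset).card = 3 := by
    obtain ⟨F, -, hF⟩ := hdim
    have := card_le_univ F
    rw [card_univ_sdiff, List.toFinset_card_of_nodup hnodup, hlen]
    omega
  constructor
  · intro hvd
    obtain ⟨R, hR⟩ := hvd.exists_delSeq_faces_eq
    have hRfacet := SC.facet_of_faces_eq hR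
    have hR3 : R.card = 3 := hvd.isPure_delSeq hpure R hRfacet
    have hRL : R ⊆ univ \ L.toFinset := fun v hv => mem_sdiff.2
      ⟨mem_univ v, fun hvL => (mem_delSeq_faces.1 hRfacet.1).2 v (List.mem_toFinset.1 hvL) hv⟩
    refine ⟨hvd.linksAlong hpure, ?_⟩
    rw [hR, eq_of_subset_of_card_le hRL (by rw [hR3, hremaining])]
  · rintro ⟨hlinks, hfin⟩
    exact vdvia_of_linksAlong hremaining hlinks hfin

theorem two_dim_vd_criterion {W : Type} [Fintype W] [DecidableEq W]
    (n : ℕ) (hcard : Fintype.card W = n) (Δ : SC W)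
    (hpure : ∀ F : Finset W, Δ.facet F → F.card = 3)
    (hdim : ∃ F ∈ Δ.faces, F.card = 3)
    (hconn : Δ.Conn)
    (L : List W) (hlen : L.length = n - 3) (hnodup : L.Nodup) :
    VDvia Δ L ↔
      ((∀ i : Fin L.length,
          (∀ F ∈ ((delSeq Δ (L.take i)).link (L.get i)).faces, F.card ≤ 2) ∧
          (∃ F ∈ ((delSeq Δ (L.take i)).link (L.get i)).faces, F.card = 2) ∧
          ((delSeq Δ (L.take i)).link (L.get i)).Conn) ∧
        (delSeq Δ L).faces = {s : Finset W | s ⊆ Finset.univ \ L.toFinset}) :=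
  two_dim_vd_criterion_general n hcard Δ hpure hdim L hlen hnodup
end
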